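/- The second Lie algebra cohomology group of Φ' with adjoint coefficients is 3-dimensional: dim H²(Φ',Φ') = 3, with basis represented by the cocycles Γ₁(e₂,e₄)=e₂, Γ₁(e₃,e₄)=-e₃; Γ₂(e₃,e₄)=e₂; Γ₃(e₂,e₄)=e₃ (each zero on all other basis pairs). -/
import Mathlib


noncomputable section

/-- The bracket of Φ′ on `Fin 4 → ℂ`, basis `e₁,…,e₄` indexed `0,…,3`:
`[e₁,e₄]=[e₂,e₃]=-e₁`, `[e₂,e₄]=-(1/2)e₂`, `[e₃,e₄]=-(1/2)e₃`. -/
def brPhi' (x y : Fin 4 → ℂ) : Fin 4 → ℂ :=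
  ![ -(x 0 * y 3 - x 3 * y 0) - (x 1 * y 2 - x 2 * y 1),
     -(1/2) * (x 1 * y 3 - x 3 * y 1),
     -(1/2) * (x 2 * y 3 - x 3 * y 2),
     0 ]

/-- The Chevalley–Eilenberg coboundary of a 1-cochain `β` (adjoint coefficients). -/
def d1 (β : (Fin 4 → ℂ) →ₗ[ℂ] (Fin 4 → ℂ)) (x y : Fin 4 → ℂ) : Fin 4 → ℂ :=
  brPhi' x (β y) - brPhi' y (β x) - β (brPhi' x y)

/-- The Chevalley–Eilenberg coboundary of a bilinear 2-cochain (adjoint coefficients). -/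
def d2 (Γ : (Fin 4 → ℂ) → (Fin 4 → ℂ) → (Fin 4 → ℂ)) (x y z : Fin 4 → ℂ) : Fin 4 → ℂ :=
  brPhi' x (Γ y z) - brPhi' y (Γ x z) + brPhi' z (Γ x y)
    - Γ (brPhi' x y) z + Γ (brPhi' x z) y - Γ (brPhi' y z) x

/-- `Γ₁(e₂,e₄)=e₂`, `Γ₁(e₃,e₄)=-e₃`, zero on other basis pairs. -/
def G1 (x y : Fin 4 → ℂ) : Fin 4 → ℂ :=
  ![0, x 1 * y 3 - x 3 * y 1, -(x 2 * y 3 - x 3 * y 2), 0]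

/-- `Γ₂(e₃,e₄)=e₂`, zero on other basis pairs. -/
def G2 (x y : Fin 4 → ℂ) : Fin 4 → ℂ :=
  ![0, x 2 * y 3 - x 3 * y 2, 0, 0]

/-- `Γ₃(e₂,e₄)=e₃`, zero on other basis pairs. -/
def G3 (x y : Fin 4 → ℂ) : Fin 4 → ℂ :=
  ![0, 0, x 1 * y 3 - x 3 * y 1, 0]


def EE (i : Fin 4) : Fin 4 → ℂ := Pi.single i 1

lemma EEapp (i j : Fin 4) : EE i j = if j = i then 1 else 0 := by
  simp [EE, Pi.single_apply]

lemma expand_bilin (α : (Fin 4 → ℂ) →ₗ[ℂ] (Fin 4 → ℂ) →ₗ[ℂ] (Fin 4 → ℂ)) (x y : Fin 4 → ℂ) :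
    α x y = ∑ i : Fin 4, ∑ j : Fin 4, (x i * y j) • α (EE i) (EE j) := by
  have hx : x = ∑ i : Fin 4, x i • EE i := by
    funext k; simp [EE, Pi.single_apply]
  have hy : y = ∑ j : Fin 4, y j • EE j := by
    funext k; simp [EE, Pi.single_apply]
  conv_lhs => rw [hx, hy]
  simp only [map_sum, LinearMap.sum_apply, map_smul, LinearMap.smul_apply, Finset.smul_sum]
  rw [Finset.sum_comm]
  refine Finset.sum_congr rfl fun i _ => Finset.sum_congr rfl fun j _ => ?_
  rw [smul_smul, mul_comm]

lemma br01 : brPhi' (EE 0) (EE 1) = (0 : ℂ) • EE 0 := by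
  funext i; fin_cases i <;> simp [brPhi', EE, Pi.single_apply]
lemma br02 : brPhi' (EE 0) (EE 2) = (0 : ℂ) • EE 0 := by
  funext i; fin_cases i <;> simp [brPhi', EE, Pi.single_apply]
lemma br03 : brPhi' (EE 0) (EE 3) = (-1 : ℂ) • EE 0 := by
  funext i; fin_cases i <;> simp [brPhi', EE, Pi.single_apply]
lemma br12 : brPhi' (EE 1) (EE 2) = (-1 : ℂ) • EE 0 := by
  funext i; fin_cases i <;> simp [brPhi', EE, Pi.single_apply]
lemma br13 : brPhi' (EE 1) (EE 3) = (-(1/2) : ℂ) • EE 1 := by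
  funext i; fin_cases i <;> simp [brPhi', EE, Pi.single_apply]
lemma br23 : brPhi' (EE 2) (EE 3) = (-(1/2) : ℂ) • EE 2 := by
  funext i; fin_cases i <;> simp [brPhi', EE, Pi.single_apply]

set_option maxHeartbeats 4000000 in
/-- `dim H²(Φ′,Φ′) = 3`, with basis represented by the cocycles `Γ₁, Γ₂, Γ₃`:
each `Γᵢ` is a 2-cocycle, and every antisymmetric bilinear 2-cocycle `α` is
cohomologous to a unique linear combination `c₀Γ₁ + c₁Γ₂ + c₂Γ₃`. -/
theorem phi'_H2_dim_three :
    (∀ x y z : Fin 4 → ℂ, d2 G1 x y z = 0) ∧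
    (∀ x y z : Fin 4 → ℂ, d2 G2 x y z = 0) ∧
    (∀ x y z : Fin 4 → ℂ, d2 G3 x y z = 0) ∧
    ∀ α : (Fin 4 → ℂ) →ₗ[ℂ] (Fin 4 → ℂ) →ₗ[ℂ] (Fin 4 → ℂ),
      (∀ x : Fin 4 → ℂ, α x x = 0) →
      (∀ x y z : Fin 4 → ℂ, d2 (fun u v => α u v) x y z = 0) →
      ∃! c : Fin 3 → ℂ, ∃ β : (Fin 4 → ℂ) →ₗ[ℂ] (Fin 4 → ℂ),
        ∀ x y : Fin 4 → ℂ,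
          α x y = c 0 • G1 x y + c 1 • G2 x y + c 2 • G3 x y + d1 β x y := by
  refine ⟨fun x y z => ?_, fun x y z => ?_, fun x y z => ?_, ?_⟩
  · funext i; fin_cases i <;> simp [d2, G1, brPhi'] <;> ring
  · funext i; fin_cases i <;> simp [d2, G2, brPhi'] <;> ring
  · funext i; fin_cases i <;> simp [d2, G3, brPhi'] <;> ring
  intro α hanti hcoc
  have hswapv : ∀ x y : Fin 4 → ℂ, α y x = -α x y := by
    intro x y
    have h := hanti (x + y)
    simp only [map_add, LinearMap.add_apply, hanti x, hanti y, zero_add, add_zero] at h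
    funext k
    have hk := congrFun h k
    simp only [Pi.add_apply, Pi.neg_apply, Pi.zero_apply] at hk ⊢
    linear_combination hk
  have hsw : ∀ i j k : Fin 4, α (EE j) (EE i) k = -(α (EE i) (EE j) k) := fun i j k => by
    have := congrFun (hswapv (EE i) (EE j)) k; simpa using this
  have hdg : ∀ i k : Fin 4, α (EE i) (EE i) k = 0 := fun i k => by
    have := congrFun (hanti (EE i)) k; simpa using this
  have hc0 := congrFun (hcoc (EE 0) (EE 1) (EE 2)) 0
  have hc1 := congrFun (hcoc (EE 0) (EE 1) (EE 2)) 1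
  have hc2 := congrFun (hcoc (EE 0) (EE 1) (EE 2)) 2
  have hc3 := congrFun (hcoc (EE 0) (EE 1) (EE 2)) 3
  have hc4 := congrFun (hcoc (EE 0) (EE 1) (EE 3)) 0
  have hc5 := congrFun (hcoc (EE 0) (EE 1) (EE 3)) 1
  have hc6 := congrFun (hcoc (EE 0) (EE 1) (EE 3)) 2
  have hc7 := congrFun (hcoc (EE 0) (EE 1) (EE 3)) 3
  have hc8 := congrFun (hcoc (EE 0) (EE 2) (EE 3)) 0
  have hc9 := congrFun (hcoc (EE 0) (EE 2) (EE 3)) 1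
  have hc10 := congrFun (hcoc (EE 0) (EE 2) (EE 3)) 2
  have hc11 := congrFun (hcoc (EE 0) (EE 2) (EE 3)) 3
  have hc12 := congrFun (hcoc (EE 1) (EE 2) (EE 3)) 0
  have hc13 := congrFun (hcoc (EE 1) (EE 2) (EE 3)) 1
  have hc14 := congrFun (hcoc (EE 1) (EE 2) (EE 3)) 2
  have hc15 := congrFun (hcoc (EE 1) (EE 2) (EE 3)) 3
  simp only [d2] at hc0 hc1 hc2 hc3 hc4 hc5 hc6 hc7 hc8 hc9 hc10 hc11 hc12 hc13 hc14 hc15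
  rw [br01, br02, br12] at hc0 hc1 hc2 hc3
  rw [br01, br03, br13] at hc4 hc5 hc6 hc7
  rw [br02, br03, br23] at hc8 hc9 hc10 hc11
  rw [br12, br13, br23] at hc12 hc13 hc14 hc15
  simp only [map_smul, map_neg, map_zero, LinearMap.smul_apply, LinearMap.neg_apply, Pi.smul_apply, Pi.neg_apply, Pi.add_apply, Pi.sub_apply, Pi.zero_apply, smul_eq_mul, brPhi', EEapp, Fin.reduceEq, reduceIte] at hc0 hc1 hc2 hc3 hc4 hc5 hc6 hc7 hc8 hc9 hc10 hc11 hc12 hc13 hc14 hc15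
  simp only [Matrix.cons_val_zero, Matrix.cons_val_one, Matrix.head_cons, Matrix.cons_val_two, Matrix.tail_cons, Matrix.cons_val_three] at hc0 hc1 hc2 hc3 hc4 hc5 hc6 hc7 hc8 hc9 hc10 hc11 hc12 hc13 hc14 hc15
  norm_num at hc0 hc1 hc2 hc3 hc4 hc5 hc6 hc7 hc8 hc9 hc10 hc11 hc12 hc13 hc14 hc15
  refine ⟨![(-1/2 : ℂ) * α (EE 0) (EE 3) 0 + (1 : ℂ) * α (EE 1) (EE 3) 1, (1 : ℂ) * α (EE 2) (EE 3) 1, (1 : ℂ) * α (EE 1) (EE 3) 2], ⟨(Matrix.of ![![(1 : ℂ) * α (EE 1) (EE 2) 0, (-2 : ℂ) * α (EE 1) (EE 3) 0, (-2 : ℂ) * α (EE 2) (EE 3) 0, 0], ![(1 : ℂ) * α (EE 1) (EE 2) 1 + (1 : ℂ) * α (EE 2) (EE 3) 3, 0, 0, 0], ![(1 : ℂ) * α (EE 1) (EE 2) 2 + (-1 : ℂ) * α (EE 1) (EE 3) 3, 0, 0, 0], ![(1 : ℂ) * α (EE 1) (EE 2) 3, (2 : ℂ) * α (EE 1) (EE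 3) 3, (2 : ℂ) * α (EE 2) (EE 3) 3, (-1 : ℂ) * α (EE 1) (EE 3) 1 + (-1 : ℂ) * α (EE 2) (EE 3) 2]]).mulVecLin, ?_⟩, ?_⟩
  · intro x y
    rw [expand_bilin α x y]
    funext k
    fin_cases k
    · simp only [Fin.reduceFinMk, Fin.zero_eta, Fin.mk_one, Finset.sum_apply, Fin.sum_univ_four, Pi.smul_apply, smul_eq_mul, Pi.add_apply, Pi.sub_apply, G1, G2, G3, d1, brPhi', EEapp, Matrix.mulVecLin_apply, Matrix.mulVec, dotProduct, Matrix.of_apply, Matrix.cons_val_zero, Matrix.cons_val_one, Matrix.head_cons, Matrix.cons_val_two, Matrix.tail_cons, Matrix.cons_val_three, Matrix.cons_val', Matrix.empty_val', Matrix.cons_val_fin_one, Matrix.head_fin_const]; norm_num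
      linear_combination ((-2 : ℂ) * (x 0 * y 1) + (2 : ℂ) * (x 1 * y 0)) * hc4 + ((-2 : ℂ) * (x 0 * y 2) + (2 : ℂ) * (x 2 * y 0)) * hc8 + ((1 : ℂ) * (x 0 * y 3) + (-1 : ℂ) * (x 3 * y 0)) * hc12 + ((-2 : ℂ) * (x 0 * y 2) + (2 : ℂ) * (x 2 * y 0)) * hc13 + ((2 : ℂ) * (x 0 * y 1) + (-2 : ℂ) * (x 1 * y 0)) * hc14 + ((1 : ℂ) * (x 0 * y 1)) * hsw 0 1 0 + ((1 : ℂ) * (x 0 * y 2)) * hsw 0 2 0 + ((1 : ℂ) * (x 3 * y 0)) * hsw 0 3 0 + ((-1/2 : ℂ) * (x 0 * y 3) + (1 : ℂ) * (x 2 * y 1) + (1/2 : ℂ) * (x 3 * y 0)) * hsw 1 2 0 + ((1 : ℂ) * (x 0 * y 2) + (-1 : ℂ) * (x 2 * y 0)) * hsw 1 2 1 + ((-1 : ℂ) * (x 0 * y 1) + (1 : ℂ) * (x 1 * y 0)) * hsw 1 2 2 + ((1 : ℂ) * (x 3 * y 1)) * hsw 1 3 0 + ((1 : ℂ) * (x 3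 * y 2)) * hsw 2 3 0 + ((1 : ℂ) * (x 0 * y 0)) * hdg 0 0 + ((1 : ℂ) * (x 1 * y 1)) * hdg 1 0 + ((1 : ℂ) * (x 2 * y 2)) * hdg 2 0 + ((1 : ℂ) * (x 3 * y 3)) * hdg 3 0
    · simp only [Fin.reduceFinMk, Fin.zero_eta, Fin.mk_one, Finset.sum_apply, Fin.sum_univ_four, Pi.smul_apply, smul_eq_mul, Pi.add_apply, Pi.sub_apply, G1, G2, G3, d1, brPhi', EEapp, Matrix.mulVecLin_apply, Matrix.mulVec, dotProduct, Matrix.of_apply, Matrix.cons_val_zero, Matrix.cons_val_one, Matrix.head_cons, Matrix.cons_val_two, Matrix.tail_cons, Matrix.cons_val_three, Matrix.cons_val', Matrix.empty_val', Matrix.cons_val_fin_one, Matrix.head_fin_const]; norm_num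
      linear_combination ((1/2 : ℂ) * (x 0 * y 1) + (-1/2 : ℂ) * (x 1 * y 0)) * hc0 + ((-1/2 : ℂ) * (x 0 * y 1) + (1/2 : ℂ) * (x 1 * y 0)) * hc5 + ((-1 : ℂ) * (x 0 * y 2) + (1 : ℂ) * (x 2 * y 0)) * hc9 + ((1/2 : ℂ) * (x 0 * y 1) + (-1/2 : ℂ) * (x 1 * y 0)) * hc10 + ((1/2 : ℂ) * (x 1 * y 3) + (-1/2 : ℂ) * (x 3 * y 1)) * hc12 + ((1 : ℂ) * (x 0 * y 3) + (-1 : ℂ) * (x 3 * y 0)) * hc13 + ((1/4 : ℂ) * (x 0 * y 1) + (3/4 : ℂ) * (x 1 * y 0)) * hsw 0 1 1 + ((1/2 : ℂ) * (x 0 * y 2) + (1/2 : ℂ) * (x 2 * y 0)) * hsw 0 2 1 + ((-1/4 : ℂ) * (x 0 * y 1) + (1/4 : ℂ) * (x 1 * y 0)) * hsw 0 2 2 + ((1 : ℂ) * (x 3 * y 0)) * hsw 0 3 1 + ((-1/4 : ℂ) * (x 1 * y 3) + (1/4 : ℂ) * (x 3 * y 1)) * hsw 1 2 0 + ((-1/2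 : ℂ) * (x 0 * y 3) + (1 : ℂ) * (x 2 * y 1) + (1/2 : ℂ) * (x 3 * y 0)) * hsw 1 2 1 + ((1 : ℂ) * (x 3 * y 1)) * hsw 1 3 1 + ((1 : ℂ) * (x 3 * y 2)) * hsw 2 3 1 + ((-1/2 : ℂ) * (x 0 * y 1) + (1/2 : ℂ) * (x 1 * y 0)) * hdg 0 0 + ((1 : ℂ) * (x 0 * y 0)) * hdg 0 1 + ((1 : ℂ) * (x 1 * y 1)) * hdg 1 1 + ((1 : ℂ) * (x 2 * y 2)) * hdg 2 1 + ((1 : ℂ) * (x 3 * y 3)) * hdg 3 1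
    · simp only [Fin.reduceFinMk, Fin.zero_eta, Fin.mk_one, Finset.sum_apply, Fin.sum_univ_four, Pi.smul_apply, smul_eq_mul, Pi.add_apply, Pi.sub_apply, G1, G2, G3, d1, brPhi', EEapp, Matrix.mulVecLin_apply, Matrix.mulVec, dotProduct, Matrix.of_apply, Matrix.cons_val_zero, Matrix.cons_val_one, Matrix.head_cons, Matrix.cons_val_two, Matrix.tail_cons, Matrix.cons_val_three, Matrix.cons_val', Matrix.empty_val', Matrix.cons_val_fin_one, Matrix.head_fin_const]; norm_num
      linear_combination ((1/2 : ℂ) * (x 0 * y 2) + (-1/2 : ℂ) * (x 2 * y 0)) * hc0 + ((1/2 : ℂ) * (x 0 * y 2) + (-1/2 : ℂ) * (x 2 * y 0)) * hc5 + ((-1 : ℂ) * (x 0 * y 1) + (1 : ℂ) * (x 1 * y 0)) * hc6 + ((-1/2 : ℂ) * (x 0 * y 2) + (1/2 : ℂ) * (x 2 * y 0)) * hc10 + ((-1/2 : ℂ) * (x 2 * y 3) + (1/2 : ℂ) * (x 3 * y 2)) * hc12 + ((1 : ℂ) * (x 0 * y 3) + (-1 : ℂ) * (x 3 * y 0)) *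 hc14 + ((-1/4 : ℂ) * (x 0 * y 2) + (1/4 : ℂ) * (x 2 * y 0)) * hsw 0 1 1 + ((1/2 : ℂ) * (x 0 * y 1) + (1/2 : ℂ) * (x 1 * y 0)) * hsw 0 1 2 + ((1/4 : ℂ) * (x 0 * y 2) + (3/4 : ℂ) * (x 2 * y 0)) * hsw 0 2 2 + ((1 : ℂ) * (x 3 * y 0)) * hsw 0 3 2 + ((1/4 : ℂ) * (x 2 * y 3) + (-1/4 : ℂ) * (x 3 * y 2)) * hsw 1 2 0 + ((-1/2 : ℂ) * (x 0 * y 3) + (1 : ℂ) * (x 2 * y 1) + (1/2 : ℂ) * (x 3 * y 0)) * hsw 1 2 2 + ((1 : ℂ) * (x 3 * y 1)) * hsw 1 3 2 + ((1 : ℂ) * (x 3 * y 2)) * hsw 2 3 2 + ((-1/2 : ℂ) * (x 0 * y 2) + (1/2 : ℂ) * (x 2 * y 0)) * hdg 0 0 + ((1 : ℂ) * (x 0 * y 0)) * hdg 0 2 + ((1 : ℂ) * (x 1 * y 1)) * hdg 1 2 + ((1 : ℂ) * (x 2 * y 2)) * hdg 2 2 + ((1 : ℂ) * (x 3 * y 3))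 * hdg 3 2
    · simp only [Fin.reduceFinMk, Fin.zero_eta, Fin.mk_one, Finset.sum_apply, Fin.sum_univ_four, Pi.smul_apply, smul_eq_mul, Pi.add_apply, Pi.sub_apply, G1, G2, G3, d1, brPhi', EEapp, Matrix.mulVecLin_apply, Matrix.mulVec, dotProduct, Matrix.of_apply, Matrix.cons_val_zero, Matrix.cons_val_one, Matrix.head_cons, Matrix.cons_val_two, Matrix.tail_cons, Matrix.cons_val_three, Matrix.cons_val', Matrix.empty_val', Matrix.cons_val_fin_one, Matrix.head_fin_const]; norm_num
      linear_combination ((1 : ℂ) * (x 0 * y 3) + (-1 : ℂ) * (x 3 * y 0)) * hc0 + ((2 : ℂ) * (x 0 * y 2) + (-2 : ℂ) * (x 2 * y 0)) * hc1 + ((-2 : ℂ) * (x 0 * y 1) + (2 : ℂ) * (x 1 * y 0)) * hc2 + ((1 : ℂ) * (x 0 * y 3) + (-1 : ℂ) * (x 3 * y 0)) * hc5 + ((1 : ℂ) * (x 0 * y 3) + (-1 : ℂ) * (x 3 * y 0)) * hc10 + ((-1/2 : ℂ) * (x 0 * y 3) + (1/2 : ℂ) * (x 3 * y 0)) * hsw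 0 1 1 + ((1 : ℂ) * (x 1 * y 0)) * hsw 0 1 3 + ((-1/2 : ℂ) * (x 0 * y 3) + (1/2 : ℂ) * (x 3 * y 0)) * hsw 0 2 2 + ((1 : ℂ) * (x 2 * y 0)) * hsw 0 2 3 + ((1 : ℂ) * (x 3 * y 0)) * hsw 0 3 3 + ((1 : ℂ) * (x 2 * y 1)) * hsw 1 2 3 + ((1 : ℂ) * (x 3 * y 1)) * hsw 1 3 3 + ((1 : ℂ) * (x 3 * y 2)) * hsw 2 3 3 + ((-1 : ℂ) * (x 0 * y 3) + (1 : ℂ) * (x 3 * y 0)) * hdg 0 0 + ((-2 : ℂ) * (x 0 * y 2) + (2 : ℂ) * (x 2 * y 0)) * hdg 0 1 + ((2 : ℂ) * (x 0 * y 1) + (-2 : ℂ) * (x 1 * y 0)) * hdg 0 2 + ((1 : ℂ) * (x 0 * y 0)) * hdg 0 3 + ((1 : ℂ) * (x 1 * y 1)) * hdg 1 3 + ((1 : ℂ) * (x 2 * y 2)) * hdg 2 3 + ((1 : ℂ) * (x 3 * y 3)) * hdg 3 3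
  · rintro c' ⟨β', hβ'⟩
    have hp0 := congrFun (hβ' (EE 0) (EE 3)) 0
    have hp1 := congrFun (hβ' (EE 1) (EE 3)) 1
    have hp2 := congrFun (hβ' (EE 1) (EE 3)) 2
    have hp3 := congrFun (hβ' (EE 2) (EE 3)) 1
    simp only [d1] at hp0 hp1 hp2 hp3
    rw [br03] at hp0
    rw [br13] at hp1
    rw [br13] at hp2
    rw [br23] at hp3
    simp only [map_smul, LinearMap.smul_apply, Pi.smul_apply, Pi.add_apply, Pi.sub_apply, smul_eq_mul, G1, G2, G3, brPhi', EEapp, Fin.reduceEq, reduceIte] at hp0 hp1 hp2 hp3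
    simp only [Matrix.cons_val_zero, Matrix.cons_val_one, Matrix.head_cons, Matrix.cons_val_two, Matrix.tail_cons, Matrix.cons_val_three] at hp0 hp1 hp2 hp3
    norm_num at hp0 hp1 hp2 hp3
    funext i
    fin_cases i
    · simp only [Fin.reduceFinMk, Fin.zero_eta, Fin.mk_one, Matrix.cons_val_zero, Matrix.cons_val_one, Matrix.head_cons, Matrix.cons_val_two, Matrix.tail_cons, Matrix.cons_val_three]
      linear_combination (1/2 : ℂ) * hp0 + (-1 : ℂ) * hp1
    · simp only [Fin.reduceFinMk, Fin.zero_eta, Fin.mk_one, Matrix.cons_val_zero, Matrix.cons_val_one, Matrix.head_cons, Matrix.cons_val_two, Matrix.tail_cons, Matrix.cons_val_three]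
      linear_combination (-1 : ℂ) * hp3
    · simp only [Fin.reduceFinMk, Fin.zero_eta, Fin.mk_one, Matrix.cons_val_zero, Matrix.cons_val_one, Matrix.head_cons, Matrix.cons_val_two, Matrix.tail_cons, Matrix.cons_val_three]
      linear_combination (-1 : ℂ) * hp2
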